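/- Fix λ > 0, K ≥ 0, and a continuous function f : ℝ → ℝ with f ≥ 0 and f(y) = 0 whenever |y| > K. For every ε > 0 there exists T > 0 such that for all t ≥ T and all x ∈ [−λt − t^{2/3}, −λt + t^{2/3}], one has | √(2πt) · e^{(λt−x)²/(2t)} · ∫_ℝ (1 − e^{−f(y)}) dν_x(y) − ∫_ℝ (1 − e^{−f(y)}) e^{−2λy} dy | ≤ ε, where ν_x is the Gaussian probability measure on ℝ with mean x − λt and variance t. In other words, uniformly over x in this window, E[1 − e^{−f(x + B_t − λt)}] = (1 + o_t(1)) · (∫ (1 − e^{−f(y)}) e^{−2λy} dy) · (1/√(2πt)) · e^{−(λt−x)²/(2t)}. -/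

import Mathlib

/-!
With `m = x - λt`, the factor `√(2πt) e^{m²/(2t)}` turns the Gaussian density into
`e^{my/t - y²/(2t)}`, and for `|y| ≤ K` and `|x + λt| ≤ t^{2/3}` this exponent differs from
`-2λy` by at most `K t^{-1/3} + K²/(2t)`. As `1 - e^{-f}` vanishes off `[-K, K]`, the two integrals
differ by at most `e^{2|λ|K} (e^{K t^{-1/3} + K²/(2t)} - 1) ∫ |1 - e^{-f}|`, uniformly in `x`.
-/

open MeasureTheory ProbabilityTheory Real Filter Set Topology

lemma sqrt_mul_exp_mul_integral_gaussianReal (m : ℝ) {v : ℝ} (hv : 0 < v) (g : ℝ → ℝ) :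
    √(2 * π * v) * exp (m ^ 2 / (2 * v)) * ∫ y, g y ∂gaussianReal m v.toNNReal
      = ∫ y, g y * exp (m * y / v - y ^ 2 / (2 * v)) := by
  rw [integral_gaussianReal_eq_integral_smul (by simpa using hv), ← integral_const_mul]
  congr 1 with y
  have hexp : exp (m ^ 2 / (2 * v)) * exp (-(y - m) ^ 2 / (2 * v))
      = exp (m * y / v - y ^ 2 / (2 * v)) := by
    rw [← exp_add]; congr 1; field_simp; ring
  simp only [gaussianPDFReal, smul_eq_mul, Real.coe_toNNReal _ hv.le, ← hexp]
  field_simp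

lemma abs_exp_sub_one_le_exp_abs_sub_one (u : ℝ) : |exp u - 1| ≤ exp |u| - 1 := by
  rcases le_total 0 u with hu | hu
  · rw [abs_of_nonneg hu, abs_of_nonneg (by linarith [one_le_exp hu])]
  · have hexp : exp u * exp (-u) = 1 := by rw [← exp_add, add_neg_cancel, exp_zero]
    rw [abs_of_nonpos hu, abs_of_nonpos (by linarith [exp_le_one_iff.2 hu])]
    nlinarith [exp_le_one_iff.2 hu, one_le_exp (neg_nonneg.2 hu), exp_pos u]

lemma abs_exp_sub_exp_le (a b : ℝ) : |exp a - exp b| ≤ exp b * (exp |a - b| - 1) := by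
  have : exp a - exp b = exp b * (exp (a - b) - 1) := by
    rw [mul_sub, ← exp_add, add_sub_cancel, mul_one]
  rw [this, abs_mul, abs_of_pos (exp_pos b)]
  exact mul_le_mul_of_nonneg_left (abs_exp_sub_one_le_exp_abs_sub_one _) (exp_pos b).le

lemma abs_integral_mul_exp_sub_integral_mul_exp_le {g φ ψ : ℝ → ℝ} {s : Set ℝ} {c δ : ℝ}
    (hg : Continuous g) (hgc : HasCompactSupport g) (hφ : Continuous φ) (hψ : Continuous ψ)
    (hg_zero : ∀ y ∉ s, g y = 0) (hψc : ∀ y ∈ s, ψ y ≤ c) (hφψ : ∀ y ∈ s, |φ y - ψ y| ≤ δ) :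
    |(∫ y, g y * exp (φ y)) - ∫ y, g y * exp (ψ y)| ≤ exp c * (exp δ - 1) * ∫ y, |g y| := by
  have hint : ∀ {χ : ℝ → ℝ}, Continuous χ → Integrable (fun y => g y * exp (χ y)) volume :=
    fun hχ => (hg.mul hχ.rexp).integrable_of_hasCompactSupport hgc.mul_right
  have hg_abs : Integrable (fun y => |g y|) volume :=
    hg.abs.integrable_of_hasCompactSupport hgc.abs
  rw [← integral_sub (hint hφ) (hint hψ), ← integral_const_mul, ← norm_eq_abs]
  refine norm_integral_le_of_norm_le (hg_abs.const_mul _) (Eventually.of_forall fun y => ?_)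
  by_cases hy : y ∈ s
  · rw [← mul_sub, norm_mul, norm_eq_abs, norm_eq_abs, mul_comm]
    gcongr
    calc |exp (φ y) - exp (ψ y)| ≤ exp (ψ y) * (exp |φ y - ψ y| - 1) := abs_exp_sub_exp_le _ _
      _ ≤ exp c * (exp δ - 1) := by
        gcongr
        · linarith [add_one_le_exp |φ y - ψ y|, abs_nonneg (φ y - ψ y)]
        · exact hψc y hy
        · exact hφψ y hy
  · simp [hg_zero y hy]

lemma abs_gaussian_exponent_sub_le {lam t x y w K : ℝ} (ht : 0 < t) (hx : |x + lam * t| ≤ w)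
    (hy : |y| ≤ K) :
    |((x - lam * t) * y / t - y ^ 2 / (2 * t)) - -(2 * lam * y)| ≤ K * w / t + K ^ 2 / (2 * t) := by
  have : (x - lam * t) * y / t - y ^ 2 / (2 * t) - -(2 * lam * y)
      = y * (x + lam * t) / t - y ^ 2 / (2 * t) := by field_simp; ring
  rw [this]
  refine (abs_sub _ _).trans (add_le_add ?_ ?_)
  · rw [abs_div, abs_mul, abs_of_pos ht]
    gcongr
    exact (abs_nonneg _).trans hy
  · rw [abs_div, abs_of_pos (by positivity : 0 < 2 * t), abs_of_nonneg (sq_nonneg y)]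
    exact div_le_div_of_nonneg_right (sq_le_sq' (abs_le.1 hy).1 (abs_le.1 hy).2) (by positivity)

lemma tendsto_mul_rpow_two_thirds_div_add_sq_div (K : ℝ) :
    Tendsto (fun t : ℝ => K * t ^ ((2 : ℝ) / 3) / t + K ^ 2 / (2 * t)) atTop (𝓝 0) := by
  have h1 : Tendsto (fun t : ℝ => K * t ^ (-(1 / 3 : ℝ))) atTop (𝓝 0) := by
    simpa using (tendsto_rpow_neg_atTop (by norm_num : (0 : ℝ) < 1 / 3)).const_mul K
  have h2 : Tendsto (fun t : ℝ => K ^ 2 / 2 * t⁻¹) atTop (𝓝 0) := by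
    simpa using (tendsto_inv_atTop_zero (𝕜 := ℝ)).const_mul (K ^ 2 / 2)
  refine (add_zero (0 : ℝ) ▸ h1.add h2).congr' ?_
  filter_upwards [eventually_gt_atTop 0] with t ht
  rw [show -(1 / 3 : ℝ) = 2 / 3 - 1 by norm_num, rpow_sub ht, rpow_one]
  field_simp

theorem laplace_functional_asymptotics_left_window_general (lam K : ℝ)
    (f : ℝ → ℝ) (hf : Continuous f)
    (hf_supp : ∀ y, K < |y| → f y = 0) :
    ∀ ε > 0, ∃ T > 0, ∀ t ≥ T,
      ∀ x ∈ Set.Icc (-lam * t - t ^ ((2 : ℝ) / 3)) (-lam * t + t ^ ((2 : ℝ) / 3)),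
        |Real.sqrt (2 * Real.pi * t) * Real.exp ((lam * t - x) ^ 2 / (2 * t))
            * (∫ y, (1 - Real.exp (-f y)) ∂(gaussianReal (x - lam * t) t.toNNReal))
          - ∫ y, (1 - Real.exp (-f y)) * Real.exp (-(2 * lam * y))| ≤ ε := by
  intro ε hε
  set g : ℝ → ℝ := fun y => 1 - exp (-f y)
  have hg_zero : ∀ y ∉ Icc (-K) K, g y = 0 := fun y hy => by
    simp [g, hf_supp y (lt_of_not_ge fun h => hy (abs_le.1 h))]
  have hB : Tendsto (fun t : ℝ => exp (2 * |lam| * K)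
      * (exp (K * t ^ ((2 : ℝ) / 3) / t + K ^ 2 / (2 * t)) - 1) * ∫ y, |g y|) atTop (𝓝 0) := by
    simpa using (((tendsto_mul_rpow_two_thirds_div_add_sq_div K).rexp.sub_const 1).const_mul
      (exp (2 * |lam| * K))).mul_const (∫ y, |g y|)
  obtain ⟨T, hT⟩ := eventually_atTop.1 ((hB.eventually (ge_mem_nhds hε)).and
    (eventually_gt_atTop 0))
  refine ⟨max T 1, lt_max_of_lt_right one_pos, fun t ht x hx => ?_⟩
  obtain ⟨hBt, ht_pos⟩ := hT t (le_of_max_le_left ht)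
  have hx' : |x + lam * t| ≤ t ^ ((2 : ℝ) / 3) := abs_le.2 ⟨by linarith [hx.1], by linarith [hx.2]⟩
  rw [sub_sq_comm, sqrt_mul_exp_mul_integral_gaussianReal _ ht_pos]
  refine (abs_integral_mul_exp_sub_integral_mul_exp_le (by fun_prop)
    (.intro isCompact_Icc hg_zero) (by fun_prop) (by fun_prop) hg_zero (fun y hy => ?_)
    (fun y hy => abs_gaussian_exponent_sub_le ht_pos hx' (abs_le.2 hy))).trans hBt
  calc -(2 * lam * y) ≤ |2 * lam * y| := neg_le_abs _
    _ = 2 * |lam| * |y| := by simp [abs_mul]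
    _ ≤ 2 * |lam| * K := by gcongr; exact abs_le.2 hy

/-- Uniformly over `x ∈ [-λt - t^{2/3}, -λt + t^{2/3}]` (with `λ > 0`),
`E[1 - e^{-f(x + B_t - λt)}]
  = (1 + o_t(1)) (∫ (1 - e^{-f(y)}) e^{-2λy} dy) (1/√(2πt)) e^{-(λt-x)²/(2t)}`
for a nonnegative continuous `f` supported in `[-K, K]`. -/
theorem laplace_functional_asymptotics_left_window (lam K : ℝ) (hlam : 0 < lam) (hK : 0 ≤ K)
    (f : ℝ → ℝ) (hf : Continuous f) (hf_nonneg : ∀ y, 0 ≤ f y)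
    (hf_supp : ∀ y, K < |y| → f y = 0) :
    ∀ ε > 0, ∃ T > 0, ∀ t ≥ T,
      ∀ x ∈ Set.Icc (-lam * t - t ^ ((2 : ℝ) / 3)) (-lam * t + t ^ ((2 : ℝ) / 3)),
        |Real.sqrt (2 * Real.pi * t) * Real.exp ((lam * t - x) ^ 2 / (2 * t))
            * (∫ y, (1 - Real.exp (-f y)) ∂(gaussianReal (x - lam * t) t.toNNReal))
          - ∫ y, (1 - Real.exp (-f y)) * Real.exp (-(2 * lam * y))| ≤ ε :=
  laplace_functional_asymptotics_left_window_general lam K f hf hf_supp
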